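/- (Theorem 1(iii), minimum-separation guarantee) Let 0 ≤ d_min < d̂. Along any solution of the closed-loop multi-sUAS system whose initial Hamiltonian satisfies H(t₀) = c < ψ(‖d_min‖_σ) (where ‖d_min‖_σ = (1/ε)(√(1 + ε d_min²) − 1)), every pair of distinct agents maintains more than the minimum separation: ‖q_i(t) − q_j(t)‖ > d_min for all t ≥ t₀ and all i ≠ j. -/

import Mathlib

/-!
The Hamiltonian `H = V_p + V_k + V_b` is a Lyapunov function of the closed loop: the pair forces
are the gradient of `V_p`, the boundary forces that of `V_b`, Newton's third law makes the pair
forces blind to the reference velocity `v̂`, and `v̂` is parallel to the boundary planes, so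
`dH/dt = -∑ᵢ Kᵢ ‖q̇ᵢ - v̂‖² ≤ 0`. Since every summand of `H` is nonnegative, a single pair term
`ψ(‖qᵢ - qⱼ‖_σ)` never exceeds `H(t) ≤ H(t₀) = c < ψ(‖d_min‖_σ)`, and as `ψ` is nonincreasing
and `r ↦ ‖r‖_σ` increasing on `[0, ∞)`, this forces `‖qᵢ - qⱼ‖ > d_min`.
-/

open Finset RealInnerProductSpace

noncomputable section

-- The σ-norm of a vector `z` is `sigmaNorm ε ‖z‖`.
def sigmaNorm (ε r : ℝ) : ℝ := (1 / ε) * (Real.sqrt (1 + ε * r ^ 2) - 1)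

lemma sigmaNorm_le_sigmaNorm {ε r s : ℝ} (hε : 0 < ε) (hr : 0 ≤ r) (hrs : r ≤ s) :
    sigmaNorm ε r ≤ sigmaNorm ε s := by
  unfold sigmaNorm
  gcongr

section Lyapunov

variable {E : Type*} [NormedAddCommGroup E] [InnerProductSpace ℝ E]

def sigmaGrad (φ : ℝ → ℝ) (ε : ℝ) (z : E) : E :=
  (φ (sigmaNorm ε ‖z‖) * (Real.sqrt (1 + ε * ‖z‖ ^ 2))⁻¹) • z

lemma sigmaGrad_neg (φ : ℝ → ℝ) (ε : ℝ) (z : E) : sigmaGrad φ ε (-z) = -sigmaGrad φ ε z := by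
  simp only [sigmaGrad, norm_neg, smul_neg]

lemma hasDerivAt_comp_sigmaNorm {ψ φ : ℝ → ℝ} {ε : ℝ} (hε : 0 < ε)
    (hψ : ∀ x, HasDerivAt ψ (φ x) x) {f : ℝ → E} {f' : E} {t : ℝ} (hf : HasDerivAt f f' t) :
    HasDerivAt (fun s => ψ (sigmaNorm ε ‖f s‖)) ⟪sigmaGrad φ ε (f t), f'⟫ t := by
  have hpos : 0 < 1 + ε * ‖f t‖ ^ 2 := by positivity
  have hσ := ((((hf.norm_sq.const_mul ε).const_add 1).sqrt hpos.ne').sub_const 1).const_mul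
    (1 / ε)
  refine ((hψ _).comp t hσ).congr_deriv ?_
  have hsqrt : Real.sqrt (1 + ε * ‖f t‖ ^ 2) ≠ 0 := (Real.sqrt_pos.2 hpos).ne'
  simp only [sigmaGrad, sigmaNorm, real_inner_smul_left]
  field_simp

variable {ι κ : Type*} [Fintype ι] [Fintype κ]
variable {ψ φ ψb φb : ℝ → ℝ} {ε : ℝ} {q v : ι → ℝ → E} {t : ℝ}

def kineticEnergy (vhat : E) (v : ι → E) : ℝ := (1 / 2) * ∑ i, ‖v i - vhat‖ ^ 2

lemma hasDerivAt_kineticEnergy (vhat : E) {a : ι → E} (hv : ∀ i, HasDerivAt (v i) (a i) t) :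
    HasDerivAt (fun s => kineticEnergy vhat (fun i => v i s)) (∑ i, ⟪v i t - vhat, a i⟫) t := by
  refine ((HasDerivAt.fun_sum fun i (_ : i ∈ univ) =>
    ((hv i).sub_const vhat).norm_sq).const_mul (1 / 2)).congr_deriv ?_
  rw [mul_sum]
  simp only [← mul_assoc]
  norm_num

def boundaryPotential (ψb : ℝ → ℝ) (A : κ → E) (b : κ → ℝ) (x : ι → E) : ℝ :=
  ∑ i, ∑ n, ψb (⟪A n, x i⟫ - b n)

def boundaryForce (φb : ℝ → ℝ) (A : κ → E) (b : κ → ℝ) (y : E) : E :=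
  ∑ n, φb (⟪A n, y⟫ - b n) • A n

lemma inner_boundaryForce_eq_zero {A : κ → E} {vhat : E} (hvhat : ∀ n, ⟪A n, vhat⟫ = 0)
    (φb : ℝ → ℝ) (b : κ → ℝ) (y : E) : ⟪boundaryForce φb A b y, vhat⟫ = 0 := by
  simp only [boundaryForce, sum_inner, real_inner_smul_left, hvhat, mul_zero, sum_const_zero]

lemma hasDerivAt_boundaryPotential (hψb : ∀ x, HasDerivAt ψb (φb x) x) (A : κ → E)
    (b : κ → ℝ) (hq : ∀ i, HasDerivAt (q i) (v i t) t) :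
    HasDerivAt (fun s => boundaryPotential ψb A b (fun i => q i s))
      (∑ i, ⟪boundaryForce φb A b (q i t), v i t⟫) t := by
  have hterm := HasDerivAt.fun_sum fun i (_ : i ∈ univ) => HasDerivAt.fun_sum
    fun n (_ : n ∈ univ) => (hψb _).comp t
      (((hasDerivAt_const t (A n)).inner ℝ (hq i)).sub_const (b n))
  refine hterm.congr_deriv ?_
  simp only [boundaryForce, sum_inner, real_inner_smul_left, inner_zero_left, add_zero]

variable [DecidableEq ι]

lemma sum_sum_erase_comm {M : Type*} [AddCommMonoid M] (g : ι → ι → M) :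
    ∑ i, ∑ j ∈ univ.erase i, g i j = ∑ i, ∑ j ∈ univ.erase i, g j i :=
  sum_comm' fun i j => by simp only [mem_univ, mem_erase, true_and, and_true]; exact ne_comm

lemma sum_sum_erase_eq_zero_of_antisymm {M : Type*} [AddCommGroup M] [IsAddTorsionFree M]
    (G : ι → ι → M) (hG : ∀ i j, G j i = -G i j) :
    ∑ i, ∑ j ∈ univ.erase i, G i j = 0 := by
  refine self_eq_neg.1 ?_
  calc ∑ i, ∑ j ∈ univ.erase i, G i j = ∑ i, ∑ j ∈ univ.erase i, G j i := sum_sum_erase_comm G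
    _ = -∑ i, ∑ j ∈ univ.erase i, G i j := by
      simp only [← sum_neg_distrib]
      exact sum_congr rfl fun i _ => sum_congr rfl fun j _ => hG i j

lemma sum_sum_erase_inner_sub_of_antisymm (G : ι → ι → E) (hG : ∀ i j, G j i = -G i j)
    (w : ι → E) :
    ∑ i, ∑ j ∈ univ.erase i, ⟪G i j, w i - w j⟫ = 2 * ∑ i, ⟪∑ j ∈ univ.erase i, G i j, w i⟫ := by
  have hswap : ∑ i, ∑ j ∈ univ.erase i, ⟪G i j, w j⟫
      = -∑ i, ∑ j ∈ univ.erase i, ⟪G i j, w i⟫ := by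
    rw [sum_sum_erase_comm]
    simp only [← sum_neg_distrib]
    exact sum_congr rfl fun i _ => sum_congr rfl fun j _ => by rw [hG, inner_neg_left]
  simp only [inner_sub_right, sum_sub_distrib, hswap, sum_inner]
  ring

def pairPotential (ψ : ℝ → ℝ) (ε : ℝ) (x : ι → E) : ℝ :=
  (1 / 2) * ∑ i, ∑ j ∈ univ.erase i, ψ (sigmaNorm ε ‖x i - x j‖)

def pairForce (φ : ℝ → ℝ) (ε : ℝ) (x : ι → E) (i : ι) : E :=
  ∑ j ∈ univ.erase i, sigmaGrad φ ε (x i - x j)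

lemma sum_pairForce_eq_zero (φ : ℝ → ℝ) (ε : ℝ) (x : ι → E) : ∑ i, pairForce φ ε x i = 0 :=
  have := IsAddTorsionFree.of_isTorsionFree ℝ E
  sum_sum_erase_eq_zero_of_antisymm _ fun i j => by rw [← sigmaGrad_neg, neg_sub]

lemma hasDerivAt_pairPotential (hε : 0 < ε) (hψ : ∀ x, HasDerivAt ψ (φ x) x)
    (hq : ∀ i, HasDerivAt (q i) (v i t) t) :
    HasDerivAt (fun s => pairPotential ψ ε (fun i => q i s))
      (∑ i, ⟪pairForce φ ε (fun j => q j t) i, v i t⟫) t := by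
  have hterm := HasDerivAt.fun_sum fun i (_ : i ∈ univ) => HasDerivAt.fun_sum
    fun j (_ : j ∈ univ.erase i) => hasDerivAt_comp_sigmaNorm hε hψ ((hq i).sub (hq j))
  refine (hterm.const_mul (1 / 2)).congr_deriv ?_
  simp only [Pi.sub_apply]
  rw [sum_sum_erase_inner_sub_of_antisymm (fun i j => sigmaGrad φ ε (q i t - q j t))
    (fun i j => by rw [← sigmaGrad_neg, neg_sub])]
  simp only [pairForce]
  ring

omit [InnerProductSpace ℝ E] in
lemma le_pairPotential (hψ : ∀ x, 0 ≤ ψ x) (ε : ℝ) (x : ι → E) {i j : ι} (hij : i ≠ j) :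
    ψ (sigmaNorm ε ‖x i - x j‖) ≤ pairPotential ψ ε x := by
  have hrow : ∀ i j, j ≠ i → ψ (sigmaNorm ε ‖x i - x j‖) ≤
      ∑ k ∈ univ.erase i, ψ (sigmaNorm ε ‖x i - x k‖) := fun i j hji =>
    single_le_sum (f := fun k => ψ (sigmaNorm ε ‖x i - x k‖)) (fun _ _ => hψ _)
      (mem_erase.2 ⟨hji, mem_univ j⟩)
  have hrows := add_le_sum (f := fun i => ∑ k ∈ univ.erase i, ψ (sigmaNorm ε ‖x i - x k‖))
    (fun i _ => sum_nonneg fun _ _ => hψ _) (mem_univ i) (mem_univ j) hij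
  have hji := hrow j i hij
  rw [norm_sub_rev] at hji
  unfold pairPotential
  linarith [hrow i j hij.symm]

def hamiltonian (ψ ψb : ℝ → ℝ) (ε : ℝ) (vhat : E) (A : κ → E) (b : κ → ℝ) (x v : ι → E) : ℝ :=
  pairPotential ψ ε x + kineticEnergy vhat v + boundaryPotential ψb A b x

lemma pairPotential_le_hamiltonian (hψb : ∀ x, 0 ≤ ψb x) (ψ : ℝ → ℝ) (ε : ℝ) (vhat : E)
    (A : κ → E) (b : κ → ℝ) (x v : ι → E) :
    pairPotential ψ ε x ≤ hamiltonian ψ ψb ε vhat A b x v := by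
  have hkin : 0 ≤ kineticEnergy vhat v :=
    mul_nonneg (by norm_num) (sum_nonneg fun _ _ => sq_nonneg _)
  have hbdry : 0 ≤ boundaryPotential ψb A b x :=
    sum_nonneg fun _ _ => sum_nonneg fun _ _ => hψb _
  unfold hamiltonian
  linarith

lemma hasDerivAt_hamiltonian (hε : 0 < ε) (hψ : ∀ x, HasDerivAt ψ (φ x) x)
    (hψb : ∀ x, HasDerivAt ψb (φb x) x) {A : κ → E} {vhat : E} (hvhat : ∀ n, ⟪A n, vhat⟫ = 0)
    (b : κ → ℝ) (K : ι → ℝ) (hq : ∀ i, HasDerivAt (q i) (v i t) t)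
    (hv : ∀ i, HasDerivAt (v i) (-pairForce φ ε (fun j => q j t) i
      - boundaryForce φb A b (q i t) - K i • (v i t - vhat)) t) :
    HasDerivAt (fun s => hamiltonian ψ ψb ε vhat A b (fun i => q i s) (fun i => v i s))
      (-∑ i, K i * ‖v i t - vhat‖ ^ 2) t := by
  refine (((hasDerivAt_pairPotential hε hψ hq).add (hasDerivAt_kineticEnergy vhat hv)).add
    (hasDerivAt_boundaryPotential hψb A b hq)).congr_deriv ?_
  have hpower : ∀ i, ⟪v i t - vhat, -pairForce φ ε (fun j => q j t) i
      - boundaryForce φb A b (q i t) - K i • (v i t - vhat)⟫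
      = ⟪pairForce φ ε (fun j => q j t) i, vhat⟫ - ⟪pairForce φ ε (fun j => q j t) i, v i t⟫
        - ⟪boundaryForce φb A b (q i t), v i t⟫ - K i * ‖v i t - vhat‖ ^ 2 := fun i => by
    rw [inner_sub_right, inner_sub_right, inner_neg_right, real_inner_smul_right,
      real_inner_self_eq_norm_sq, real_inner_comm, inner_sub_right,
      real_inner_comm (boundaryForce φb A b (q i t)), inner_sub_right,
      inner_boundaryForce_eq_zero hvhat]
    ring
  simp only [hpower, sum_sub_distrib, ← sum_inner]
  rw [sum_pairForce_eq_zero, inner_zero_left]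
  ring

lemma antitone_hamiltonian (hε : 0 < ε) (hψ : ∀ x, HasDerivAt ψ (φ x) x)
    (hψb : ∀ x, HasDerivAt ψb (φb x) x) {A : κ → E} {vhat : E} (hvhat : ∀ n, ⟪A n, vhat⟫ = 0)
    (b : κ → ℝ) {K : ι → ℝ} (hK : ∀ i, 0 ≤ K i) (hq : ∀ i t, HasDerivAt (q i) (v i t) t)
    (hv : ∀ i t, HasDerivAt (v i) (-pairForce φ ε (fun j => q j t) i
      - boundaryForce φb A b (q i t) - K i • (v i t - vhat)) t) :
    Antitone fun t => hamiltonian ψ ψb ε vhat A b (fun i => q i t) (fun i => v i t) :=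
  antitone_of_hasDerivAt_nonpos
    (fun t => hasDerivAt_hamiltonian hε hψ hψb hvhat b K (hq · t) (hv · t))
    fun _ => neg_nonpos.2 <| sum_nonneg fun i _ => mul_nonneg (hK i) (sq_nonneg _)

end Lyapunov

end

theorem minimum_separation_guarantee_general
    (N m : ℕ) (ε : ℝ) (hε : 0 < ε)
    -- agent positions and velocities
    (q qv : Fin N → ℝ → EuclideanSpace ℝ (Fin 3))
    -- boundary planes
    (A : Fin m → EuclideanSpace ℝ (Fin 3)) (b : Fin m → ℝ)
    -- reference velocity, parallel to every boundary plane
    (vhat : EuclideanSpace ℝ (Fin 3)) (hvhat : ∀ n, ⟪A n, vhat⟫ = 0)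
    -- potential functions
    (ψ ψb φ φb : ℝ → ℝ)
    (hψnn : ∀ d, 0 ≤ ψ d) (hψanti : Antitone ψ)
    (hψC1 : ContDiff ℝ 1 ψ) (hφ : deriv ψ = φ)
    (hψbnn : ∀ d, 0 ≤ ψb d)
    (hψbC1 : ContDiff ℝ 1 ψb) (hφb : deriv ψb = φb)
    -- damping gains
    (K : Fin N → ℝ) (hK : ∀ i, 0 < K i)
    -- closed-loop double-integrator dynamics  q̈ᵢ = uᵢ
    (hq : ∀ i t, HasDerivAt (q i) (qv i t) t)
    (hqv : ∀ i t, HasDerivAt (qv i)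
      (-(∑ j ∈ univ.erase i,
          (φ ((1 / ε) * (Real.sqrt (1 + ε * ‖q i t - q j t‖ ^ 2) - 1)) *
            (Real.sqrt (1 + ε * ‖q i t - q j t‖ ^ 2))⁻¹) • (q i t - q j t))
        - (∑ n, φb (⟪A n, q i t⟫ - b n) • A n)
        - K i • (qv i t - vhat)) t)
    -- the Hamiltonian  H = V_p + V_k + V_b
    (t₀ : ℝ) (H : ℝ → ℝ)
    (hH : ∀ t, H t =
      (1 / 2) * ∑ i, ∑ j ∈ univ.erase i,
          ψ ((1 / ε) * (Real.sqrt (1 + ε * ‖q i t - q j t‖ ^ 2) - 1))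
      + (1 / 2) * ∑ i, ‖qv i t - vhat‖ ^ 2
      + ∑ i, ∑ n, ψb (⟪A n, q i t⟫ - b n))
    -- minimum-separation threshold and initial-energy sublevel condition
    (dmin c : ℝ)
    (hc : H t₀ = c)
    (hcs : c < ψ ((1 / ε) * (Real.sqrt (1 + ε * dmin ^ 2) - 1))) :
    ∀ t, t₀ ≤ t → ∀ i j : Fin N, i ≠ j → dmin < ‖q i t - q j t‖ := by
  have hψ : ∀ x, HasDerivAt ψ (φ x) x := fun x =>
    hφ ▸ (hψC1.differentiable one_ne_zero x).hasDerivAt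
  have hψb : ∀ x, HasDerivAt ψb (φb x) x := fun x =>
    hφb ▸ (hψbC1.differentiable one_ne_zero x).hasDerivAt
  have hH_eq : H = fun t => hamiltonian ψ ψb ε vhat A b (fun i => q i t) (fun i => qv i t) :=
    funext hH
  have hH_anti : Antitone H := by
    rw [hH_eq]
    exact antitone_hamiltonian hε hψ hψb hvhat b (fun i => (hK i).le) hq hqv
  intro t ht i j hij
  by_contra! hclose
  have hpair_le_H : pairPotential ψ ε (fun i => q i t) ≤ H t := by
    rw [hH_eq]
    exact pairPotential_le_hamiltonian hψbnn ψ ε vhat A b _ _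
  have hclose_σ : sigmaNorm ε ‖q i t - q j t‖ ≤ sigmaNorm ε dmin :=
    sigmaNorm_le_sigmaNorm hε (norm_nonneg _) hclose
  refine lt_irrefl c ?_
  calc c < ψ (sigmaNorm ε dmin) := hcs
    _ ≤ ψ (sigmaNorm ε ‖q i t - q j t‖) := hψanti hclose_σ
    _ ≤ pairPotential ψ ε (fun i => q i t) := le_pairPotential hψnn ε (fun k => q k t) hij
    _ ≤ H t := hpair_le_H
    _ ≤ H t₀ := hH_anti ht
    _ = c := hc

/-- Theorem 1(iii), minimum-separation guarantee: if the initial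
Hamiltonian satisfies `H(t₀) = c < ψ(‖d_min‖_σ)` with `0 ≤ d_min < d̂`, then
every pair of distinct agents maintains `‖qᵢ(t) − qⱼ(t)‖ > d_min` for all
`t ≥ t₀`. -/
theorem minimum_separation_guarantee
    (N m : ℕ) (ε : ℝ) (hε : 0 < ε)
    -- agent positions and velocities
    (q qv : Fin N → ℝ → EuclideanSpace ℝ (Fin 3))
    -- boundary planes
    (A : Fin m → EuclideanSpace ℝ (Fin 3)) (b : Fin m → ℝ)
    (hA : ∀ n, ‖A n‖ = 1)
    -- reference velocity, parallel to every boundary plane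
    (vhat : EuclideanSpace ℝ (Fin 3)) (hvhat : ∀ n, ⟪A n, vhat⟫ = 0)
    -- potential functions
    (dhat dbhat : ℝ) (ψ ψb φ φb : ℝ → ℝ)
    (hψnn : ∀ d, 0 ≤ ψ d) (hψanti : Antitone ψ)
    (hψC1 : ContDiff ℝ 1 ψ) (hφ : deriv ψ = φ)
    (hψ0 : ∀ d, ψ d = 0 ↔ dhat ≤ d) (hψpos : ∀ d, 0 < ψ d ↔ d < dhat)
    (hψbnn : ∀ d, 0 ≤ ψb d) (hψbanti : Antitone ψb)
    (hψbC1 : ContDiff ℝ 1 ψb) (hφb : deriv ψb = φb)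
    (hψb0 : ∀ d, ψb d = 0 ↔ dbhat ≤ d) (hψbpos : ∀ d, 0 < ψb d ↔ d < dbhat)
    -- damping gains
    (K : Fin N → ℝ) (hK : ∀ i, 0 < K i)
    -- closed-loop double-integrator dynamics  q̈ᵢ = uᵢ
    (hq : ∀ i t, HasDerivAt (q i) (qv i t) t)
    (hqv : ∀ i t, HasDerivAt (qv i)
      (-(∑ j ∈ univ.erase i,
          (φ ((1 / ε) * (Real.sqrt (1 + ε * ‖q i t - q j t‖ ^ 2) - 1)) *
            (Real.sqrt (1 + ε * ‖q i t - q j t‖ ^ 2))⁻¹) • (q i t - q j t))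
        - (∑ n, φb (⟪A n, q i t⟫ - b n) • A n)
        - K i • (qv i t - vhat)) t)
    -- the Hamiltonian  H = V_p + V_k + V_b
    (t₀ : ℝ) (H : ℝ → ℝ)
    (hH : ∀ t, H t =
      (1 / 2) * ∑ i, ∑ j ∈ univ.erase i,
          ψ ((1 / ε) * (Real.sqrt (1 + ε * ‖q i t - q j t‖ ^ 2) - 1))
      + (1 / 2) * ∑ i, ‖qv i t - vhat‖ ^ 2
      + ∑ i, ∑ n, ψb (⟪A n, q i t⟫ - b n))
    -- minimum-separation threshold and initial-energy sublevel condition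
    (dmin c : ℝ) (hdmin0 : 0 ≤ dmin) (hdmin : dmin < dhat)
    (hc : H t₀ = c)
    (hcs : c < ψ ((1 / ε) * (Real.sqrt (1 + ε * dmin ^ 2) - 1))) :
    ∀ t, t₀ ≤ t → ∀ i j : Fin N, i ≠ j → dmin < ‖q i t - q j t‖ :=
  minimum_separation_guarantee_general N m ε hε q qv A b vhat hvhat ψ ψb φ φb hψnn hψanti hψC1 hφ
    hψbnn hψbC1 hφb K hK hq hqv t₀ H hH dmin c hc hcs
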